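/- arXiv:2106.04901 — 4 statements merged into one kernel-verified Lean document; each statement's English description precedes it below -/
import Mathlib

section
/- Let Φ(s₁,s₂) := max(s₂ - s₁ - K, 0) and Φ_a := Φ - h_a, where h_a is the localized antiderivative of the Heaviside approximation. Then Φ_a(s₁,s₂) = 0 whenever s₂ - s₁ < K - a or s₂ - s₁ ≥ K + a, and |Φ_a(s₁,s₂)| ≤ a/4 for all (s₁,s₂) ∈ ℝ². -/
/-- Let `Φ(s₁,s₂) = max(s₂ - s₁ - K, 0)` be the spread call payoff and
`Φ_a := Φ - h_a`, where `h_a` is the localized antiderivative of the Heaviside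
approximation.  Then `Φ_a(s₁,s₂) = 0` whenever `s₂ - s₁ < K - a` or `s₂ - s₁ ≥ K + a`,
and `|Φ_a| ≤ a/4` everywhere. -/
theorem stmt_7 (K a : ℝ) (ha : 0 < a)
    (Φ h Φa : ℝ × ℝ → ℝ)
    (hΦ : ∀ s : ℝ × ℝ, Φ s = max (s.2 - s.1 - K) 0)
    (hh : ∀ s : ℝ × ℝ,
      h s = if s.2 - s.1 < K - a then 0
        else if s.2 - s.1 ≤ K + a then (s.2 - s.1 - (K - a)) ^ 2 / (4 * a)
        else s.2 - s.1 - K)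
    (hΦa : ∀ s, Φa s = Φ s - h s) :
    (∀ s : ℝ × ℝ, s.2 - s.1 < K - a ∨ K + a ≤ s.2 - s.1 → Φa s = 0) ∧
    (∀ s : ℝ × ℝ, |Φa s| ≤ a / 4) := by
  have key : ∀ s : ℝ × ℝ, Φa s =
      if s.2 - s.1 < K - a then 0
      else if s.2 - s.1 ≤ K + a then max (s.2 - s.1 - K) 0 - (s.2 - s.1 - (K - a)) ^ 2 / (4 * a)
      else 0 := by
    intro s
    rw [hΦa, hΦ, hh]
    by_cases h1 : s.2 - s.1 < K - a
    · simp only [if_pos h1]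
      rw [max_eq_right (by linarith)]
      ring
    · simp only [if_neg h1]
      by_cases h2 : s.2 - s.1 ≤ K + a
      · simp only [if_pos h2]
      · simp only [if_neg h2]
        rw [max_eq_left (by push_neg at h2; linarith)]
        ring
  have vanish : ∀ s : ℝ × ℝ, s.2 - s.1 < K - a ∨ K + a ≤ s.2 - s.1 → Φa s = 0 := by
    intro s hs
    rw [key]
    rcases hs with h1 | h2
    · simp [h1]
    · by_cases h1 : s.2 - s.1 < K - a
      · simp [h1]
      · simp only [if_neg h1]
        by_cases h3 : s.2 - s.1 ≤ K + a
        · simp only [if_pos h3]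
          have heq : s.2 - s.1 = K + a := le_antisymm h3 h2
          rw [max_eq_left (by linarith), heq]
          field_simp
          ring
        · simp [h3]
  refine ⟨vanish, ?_⟩
  intro s
  by_cases h1 : s.2 - s.1 < K - a
  · rw [vanish s (Or.inl h1)]; simp; positivity
  · by_cases h2 : s.2 - s.1 ≤ K + a
    · rw [key, if_neg h1, if_pos h2]
      push_neg at h1
      have hD : (s.2 - s.1 - (K - a)) ^ 2 / (4 * a) * (4 * a) = (s.2 - s.1 - (K - a)) ^ 2 :=
        div_mul_cancel₀ _ (by positivity)
      rw [abs_le]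
      rcases le_or_gt (s.2 - s.1 - K) 0 with hc | hc
      · rw [max_eq_right hc]
        constructor <;>
          nlinarith [hD, sq_nonneg (s.2 - s.1 - (K - a)),
            mul_nonneg (by linarith : (0:ℝ) ≤ K - (s.2 - s.1))
              (by linarith : (0:ℝ) ≤ s.2 - s.1 - K + 2 * a)]
      · rw [max_eq_left hc.le]
        constructor <;>
          nlinarith [hD, sq_nonneg (s.2 - s.1 - (K + a)),
            mul_nonneg hc.le (by linarith : (0:ℝ) ≤ 2 * a - (s.2 - s.1 - K))]
    · rw [vanish s (Or.inr (by push_neg at h2; linarith))]; simp; positivity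
end

section
/- Let G be a standard Gaussian random variable and f : ℝ → ℝ bounded measurable. Define u(x) := E[f(x e^{σ√T G - σ²T/2})] for x > 0 and σ, T > 0. Then u is differentiable in x and u'(x) = E[f(x e^{σ√T G - σ²T/2}) G/(x σ√T)]. -/
/-!
With `a = σ√T` and `b = σ²T/2`, for `y > 0` we have `y e^{aG - b} = h (G + log y / a)` where
`h t = f (e^{at - b})` does not depend on `y`. So `u y` is the integral of the fixed bounded
function `h` against the Gaussian law `N(log y / a, 1)`, and only the mean of that law moves with
`y`. Differentiating the density in its mean under the integral sign (dominated convergence,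
using Gaussian tails uniform for the mean in a compact set) gives
`d/dm E[h(G + m)] = E[h(G + m) G]`, and the chain rule contributes `d(log y / a)/dy = 1/(y a)`.
-/

open MeasureTheory ProbabilityTheory Real
open scoped NNReal

namespace ProbabilityTheory

variable {v : ℝ≥0}

lemma hasDerivAt_gaussianPDFReal_mean (x m : ℝ) :
    HasDerivAt (fun m ↦ gaussianPDFReal m v x) ((x - m) / v * gaussianPDFReal m v x) m := by
  have hexp : HasDerivAt (fun m : ℝ ↦ -(x - m) ^ 2 / (2 * v)) ((x - m) / v) m :=
    ((((hasDerivAt_id' m).const_sub x).pow 2).neg.div_const _).congr_deriv (by push_cast; ring)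
  exact (hexp.exp.const_mul _).congr_deriv (by rw [gaussianPDFReal]; ring)

lemma gaussianPDFReal_le_of_abs_le (hv : v ≠ 0) {m K : ℝ} (hm : |m| ≤ K) (x : ℝ) :
    gaussianPDFReal m v x ≤
      (√(2 * π * v))⁻¹ * exp (K ^ 2 / (2 * v)) * exp (-(4 * (v : ℝ))⁻¹ * x ^ 2) := by
  have hv' : (0 : ℝ) < v := by positivity
  rw [gaussianPDFReal, mul_assoc _ (exp _), ← exp_add]
  gcongr
  have hsq : x ^ 2 ≤ 2 * (x - m) ^ 2 + 2 * K ^ 2 := by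
    nlinarith [sq_nonneg (x - 2 * m), sq_abs m, abs_nonneg m]
  have hgap : K ^ 2 / (2 * v) + -(4 * (v : ℝ))⁻¹ * x ^ 2 - -(x - m) ^ 2 / (2 * v)
      = (2 * (x - m) ^ 2 + 2 * K ^ 2 - x ^ 2) / (4 * v) := by
    field_simp
    ring
  linarith [div_nonneg (sub_nonneg.2 hsq) (by positivity : (0 : ℝ) ≤ 4 * v)]

theorem hasDerivAt_integral_gaussianReal_mean (hv : v ≠ 0) {h : ℝ → ℝ} (hh : Measurable h)
    {C : ℝ} (hC : ∀ x, |h x| ≤ C) (m₀ : ℝ) :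
    HasDerivAt (fun m ↦ ∫ x, h x ∂gaussianReal m v)
      (∫ x, (x - m₀) / v * h x ∂gaussianReal m₀ v) m₀ := by
  simp only [integral_gaussianReal_eq_integral_smul hv, smul_eq_mul]
  have hv' : (0 : ℝ) < v := by positivity
  set K := |m₀| + 1
  have hK : ∀ m ∈ Metric.ball m₀ 1, |m| ≤ K := fun m hm ↦ by
    rw [Metric.mem_ball, Real.dist_eq] at hm
    linarith [abs_sub_abs_le_abs_sub m m₀]
  set c := C * ((√(2 * π * v))⁻¹ * exp (K ^ 2 / (2 * v))) / v
  have hbound_int : Integrable fun x ↦ c * ((|x| + K) * exp (-(4 * (v : ℝ))⁻¹ * x ^ 2)) := by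
    have hb : (0 : ℝ) < (4 * (v : ℝ))⁻¹ := by positivity
    refine Integrable.const_mul ?_ c
    simp only [add_mul]
    refine Integrable.add ?_ ((integrable_exp_neg_mul_sq hb).const_mul K)
    refine (integrable_mul_exp_neg_mul_sq hb).abs.congr (ae_of_all _ fun x ↦ ?_)
    simp only [abs_mul, abs_of_pos (exp_pos _)]
  refine (hasDerivAt_integral_of_dominated_loc_of_deriv_le
    (F' := fun m x ↦ gaussianPDFReal m v x * ((x - m) / v * h x))
    (Metric.ball_mem_nhds m₀ one_pos) ?_ ?_ (by fun_prop) ?_ hbound_int ?_).2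
  · exact .of_forall fun m ↦ by fun_prop
  · exact (integrable_gaussianPDFReal m₀ v).mul_bdd hh.aestronglyMeasurable (ae_of_all _ hC)
  · refine ae_of_all _ fun x m hm ↦ ?_
    have hdev : |x - m| ≤ |x| + K := (abs_sub x m).trans (by gcongr; exact hK m hm)
    rw [norm_mul, norm_mul, norm_div, Real.norm_of_nonneg (gaussianPDFReal_nonneg _ _ _),
      Real.norm_eq_abs, Real.norm_eq_abs, Real.norm_eq_abs, abs_of_pos hv']
    calc gaussianPDFReal m v x * (|x - m| / v * |h x|)
        ≤ (√(2 * π * v))⁻¹ * exp (K ^ 2 / (2 * v)) * exp (-(4 * (v : ℝ))⁻¹ * x ^ 2) *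
            ((|x| + K) / v * C) := by
          gcongr
          exacts [gaussianPDFReal_le_of_abs_le hv (hK m hm) x, hC x]
      _ = c * ((|x| + K) * exp (-(4 * (v : ℝ))⁻¹ * x ^ 2)) := by ring
  · exact ae_of_all _ fun x m _ ↦
      ((hasDerivAt_gaussianPDFReal_mean x m).mul_const (h x)).congr_deriv (by ring)

end ProbabilityTheory

theorem stmt_11_general {Ω : Type*} [MeasurableSpace Ω] (μ : Measure Ω)
    (σ T : ℝ) (hσ : 0 < σ) (hT : 0 < T)
    (G : Ω → ℝ) (hG : Measurable G) (hlaw : Measure.map G μ = gaussianReal 0 1)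
    (f : ℝ → ℝ) (hfmeas : Measurable f) (hfbdd : ∃ C : ℝ, ∀ y, |f y| ≤ C)
    (u : ℝ → ℝ)
    (hu : ∀ x, u x = ∫ ω, f (x * Real.exp (σ * Real.sqrt T * G ω - σ ^ 2 * T / 2)) ∂μ) :
    ∀ x : ℝ, 0 < x →
      HasDerivAt u
        (∫ ω, f (x * Real.exp (σ * Real.sqrt T * G ω - σ ^ 2 * T / 2)) *
          (G ω / (x * σ * Real.sqrt T)) ∂μ) x := by
  intro x hx
  obtain ⟨C, hC⟩ := hfbdd
  set a := σ * √T
  set b := σ ^ 2 * T / 2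
  have ha : 0 < a := mul_pos hσ (sqrt_pos.2 hT)
  set h : ℝ → ℝ := fun t ↦ f (exp (a * t - b))
  have hh : Measurable h := hfmeas.comp (by fun_prop)
  set m : ℝ → ℝ := fun y ↦ log y / a
  have hGlaw : HasLaw G (gaussianReal 0 1) μ := ⟨hG.aemeasurable, hlaw⟩
  have hshift (F : ℝ → ℝ) (hF : Measurable F) (c : ℝ) :
      ∫ ω, F (G ω + c) ∂μ = ∫ t, F t ∂gaussianReal c 1 := by
    simpa using (gaussianReal_add_const hGlaw c).integral_comp hF.aestronglyMeasurable
  have hscale {y : ℝ} (hy : 0 < y) (g : ℝ) : y * exp (a * g - b) = exp (a * (g + m y) - b) := by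
    rw [mul_add, mul_div_cancel₀ _ ha.ne', show a * g + log y - b = a * g - b + log y by ring,
      exp_add, exp_log hy, mul_comm]
  have hu_mean : ∀ y > 0, u y = ∫ t, h t ∂gaussianReal (m y) 1 := fun y hy ↦ by
    rw [hu, ← hshift h hh]
    simp only [h, hscale hy]
  have hrhs : ∫ ω, f (x * exp (a * G ω - b)) * (G ω / (x * σ * √T)) ∂μ
      = (∫ t, (t - m x) / (1 : ℝ≥0) * h t ∂gaussianReal (m x) 1) * (x⁻¹ / a) := by
    rw [← integral_mul_const, ← hshift _ (by fun_prop)]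
    refine integral_congr_ae (ae_of_all _ fun ω ↦ ?_)
    simp only [h, ← hscale hx, add_sub_cancel_right, NNReal.coe_one, div_one, a]
    ring
  rw [hrhs]
  refine ((hasDerivAt_integral_gaussianReal_mean one_ne_zero hh (fun t ↦ hC _) (m x)).comp x
    ((hasDerivAt_log hx.ne').div_const a)).congr_of_eventuallyEq ?_
  filter_upwards [Ioi_mem_nhds hx] with y hy using hu_mean y hy

/-- Let `G` be a standard Gaussian and `f : ℝ → ℝ` bounded measurable.
For `σ, T > 0` define `u(x) := E[f(x e^{σ√T G - σ²T/2})]`.  Then `u` is differentiable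
for `x > 0` with `u'(x) = E[f(x e^{σ√T G - σ²T/2}) · G/(x σ √T)]`. -/
theorem stmt_11 {Ω : Type*} [MeasurableSpace Ω] (μ : Measure Ω) [IsProbabilityMeasure μ]
    (σ T : ℝ) (hσ : 0 < σ) (hT : 0 < T)
    (G : Ω → ℝ) (hG : Measurable G) (hlaw : Measure.map G μ = gaussianReal 0 1)
    (f : ℝ → ℝ) (hfmeas : Measurable f) (hfbdd : ∃ C : ℝ, ∀ y, |f y| ≤ C)
    (u : ℝ → ℝ)
    (hu : ∀ x, u x = ∫ ω, f (x * Real.exp (σ * Real.sqrt T * G ω - σ ^ 2 * T / 2)) ∂μ) :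
    ∀ x : ℝ, 0 < x →
      HasDerivAt u
        (∫ ω, f (x * Real.exp (σ * Real.sqrt T * G ω - σ ^ 2 * T / 2)) *
          (G ω / (x * σ * Real.sqrt T)) ∂μ) x :=
  stmt_11_general μ σ T hσ hT G hG hlaw f hfmeas hfbdd u hu
end

section
/- Let G ~ N(0,1), σ, T > 0, and f : ℝ → ℝ bounded measurable. Define u(x) := E[f(x e^{σ√T G - σ²T/2})]. Then u is twice differentiable on (0,∞) and u''(x) = E[f(x e^{σ√T G - σ²T/2}) · ( (G/(xσ√T))² - G/(x²σ√T) - 1/(x²σ²T) )]. -/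
/-! With `a = σ√T`, `b = σ²T/2` and `w(x) = (log x - b)/a`, the substitution `s = G + w(x)` gives
`u(x) = M₀(w(x))`, where `M_n(w) = ∫ g(s) (s - w)ⁿ e^{-(s-w)²/2} ds` and `g(s) = f(e^{as})/√(2π)`.
The roughness of `f` stays in `g`, while the Gaussian factor is smooth in `w` with derivatives
dominated uniformly for `w` in a unit ball, so `M_n' = M_{n+1} - n M_{n-1}`. The chain rule gives
`x² u''(x) = (M₂ - M₀)/a² - M₁/a` at `w(x)`, and undoing the substitution turns the right-hand
side into the Malliavin weight. -/

open MeasureTheory ProbabilityTheory Real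

noncomputable def gaussMonomial (n : ℕ) (t : ℝ) : ℝ := t ^ n * exp (-t ^ 2 / 2)

lemma hasDerivAt_gaussMonomial (n : ℕ) (t : ℝ) :
    HasDerivAt (gaussMonomial n) (n * gaussMonomial (n - 1) t - gaussMonomial (n + 1) t) t := by
  have hq : HasDerivAt (fun s : ℝ => -s ^ 2 / 2) (-t) t :=
    ((hasDerivAt_pow 2 t).fun_neg.div_const 2).congr_deriv (by ring)
  refine ((hasDerivAt_pow n t).fun_mul hq.exp).congr_deriv ?_
  simp only [gaussMonomial]
  ring

lemma abs_gaussMonomial_sub_le (n : ℕ) (t : ℝ) {r : ℝ} (hr : |r| ≤ 1) :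
    |gaussMonomial n (t - r)| ≤ exp (1 / 2) * ((|t| + 1) ^ n * exp (-(1 / 4) * t ^ 2)) := by
  rw [gaussMonomial, abs_mul, abs_pow, abs_of_pos (exp_pos _)]
  have hpow : |t - r| ^ n ≤ (|t| + 1) ^ n :=
    pow_le_pow_left₀ (abs_nonneg _) ((abs_sub _ _).trans (by linarith)) n
  have hr2 : r ^ 2 ≤ 1 := (sq_le_one_iff_abs_le_one r).2 hr
  have hexp : exp (-(t - r) ^ 2 / 2) ≤ exp (1 / 2) * exp (-(1 / 4) * t ^ 2) := by
    rw [← exp_add]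
    exact exp_le_exp.2 (by nlinarith [sq_nonneg (t - 2 * r)])
  calc |t - r| ^ n * exp (-(t - r) ^ 2 / 2)
      ≤ (|t| + 1) ^ n * (exp (1 / 2) * exp (-(1 / 4) * t ^ 2)) :=
        mul_le_mul hpow hexp (exp_pos _).le (by positivity)
    _ = _ := by ring

lemma integrable_abs_pow_mul_exp_neg_mul_sq {b : ℝ} (hb : 0 < b) (n : ℕ) :
    Integrable fun t : ℝ => |t| ^ n * exp (-b * t ^ 2) := by
  refine (integrable_rpow_mul_exp_neg_mul_sq hb (s := n)
    (neg_one_lt_zero.trans_le n.cast_nonneg)).abs.congr (ae_of_all _ fun t => ?_)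
  simp [abs_mul, rpow_natCast, abs_pow]

lemma integrable_abs_add_one_pow_mul_exp_neg_mul_sq {b : ℝ} (hb : 0 < b) (n : ℕ) :
    Integrable fun t : ℝ => (|t| + 1) ^ n * exp (-b * t ^ 2) := by
  simp_rw [add_pow, one_pow, mul_one, Finset.sum_mul]
  refine integrable_finsetSum _ fun k _ => ?_
  simpa [mul_comm, mul_assoc, mul_left_comm] using
    (integrable_abs_pow_mul_exp_neg_mul_sq hb k).const_mul (n.choose k : ℝ)

lemma integrable_gaussMonomial (n : ℕ) : Integrable (gaussMonomial n) := by
  refine (integrable_rpow_mul_exp_neg_mul_sq (b := 1 / 2) (by norm_num) (s := n)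
    (neg_one_lt_zero.trans_le n.cast_nonneg)).congr (ae_of_all _ fun t => ?_)
  simp only [gaussMonomial, rpow_natCast]
  ring_nf

noncomputable def gaussianMoment (g : ℝ → ℝ) (n : ℕ) (w : ℝ) : ℝ :=
  ∫ s, g s * gaussMonomial n (s - w)

section BoundedMeasurable

variable {g : ℝ → ℝ} {C : ℝ}

lemma integrable_mul_gaussMonomial_sub (hg : Measurable g) (hgC : ∀ s, |g s| ≤ C)
    (n : ℕ) (w : ℝ) :
    Integrable fun s => g s * gaussMonomial n (s - w) :=
  ((integrable_gaussMonomial n).comp_sub_right w).bdd_mul hg.aestronglyMeasurable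
    (ae_of_all _ fun s => (Real.norm_eq_abs _).trans_le (hgC s))

/-- For `n = 0` the truncated `n - 1` is harmless: its term carries the factor `n`. -/
lemma hasDerivAt_gaussianMoment (hg : Measurable g) (hgC : ∀ s, |g s| ≤ C) (n : ℕ) (w : ℝ) :
    HasDerivAt (gaussianMoment g n)
      (gaussianMoment g (n + 1) w - n * gaussianMoment g (n - 1) w) w := by
  have hC : 0 ≤ C := (abs_nonneg _).trans (hgC 0)
  set E : ℕ → ℝ → ℝ := fun m t => exp (1 / 2) * ((|t| + 1) ^ m * exp (-(1 / 4) * t ^ 2))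
  have hE : ∀ m, Integrable (E m) := fun m =>
    (integrable_abs_add_one_pow_mul_exp_neg_mul_sq (by norm_num) m).const_mul _
  set F' : ℝ → ℝ → ℝ := fun v s =>
    g s * gaussMonomial (n + 1) (s - v) - n * (g s * gaussMonomial (n - 1) (s - v))
  have hF'_int : Integrable (F' w) :=
    (integrable_mul_gaussMonomial_sub hg hgC _ w).sub
      ((integrable_mul_gaussMonomial_sub hg hgC _ w).const_mul _)
  have hbound_int : Integrable fun s => C * (E (n + 1) (s - w) + n * E (n - 1) (s - w)) :=
    (((hE _).add ((hE _).const_mul _)).comp_sub_right w).const_mul C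
  have hbound : ∀ s, ∀ v ∈ Metric.ball w 1,
      ‖F' v s‖ ≤ C * (E (n + 1) (s - w) + n * E (n - 1) (s - w)) := by
    intro s v hv
    have hr : |v - w| ≤ 1 := (Metric.mem_ball.1 hv).le
    have hsv : s - v = (s - w) - (v - w) := by ring
    have h1 := abs_gaussMonomial_sub_le (n + 1) (s - w) hr
    have h2 := abs_gaussMonomial_sub_le (n - 1) (s - w) hr
    rw [← hsv] at h1 h2
    calc ‖F' v s‖
        ≤ |g s| * |gaussMonomial (n + 1) (s - v)| +
            n * (|g s| * |gaussMonomial (n - 1) (s - v)|) := by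
          simp only [F', Real.norm_eq_abs]
          refine (abs_sub _ _).trans_eq ?_
          rw [abs_mul, abs_mul, abs_mul, Nat.abs_cast]
      _ ≤ C * E (n + 1) (s - w) + n * (C * E (n - 1) (s - w)) := by
          gcongr <;> exact hgC s
      _ = _ := by ring
  have hderiv : ∀ s, ∀ v ∈ Metric.ball w 1,
      HasDerivAt (fun v => g s * gaussMonomial n (s - v)) (F' v s) v := fun s v _ =>
    (((hasDerivAt_gaussMonomial n (s - v)).comp v ((hasDerivAt_id v).const_sub s)).const_mul
      (g s)).congr_deriv (by simp only [F']; ring)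
  have key := (hasDerivAt_integral_of_dominated_loc_of_deriv_le
    (Metric.ball_mem_nhds w one_pos)
    (Filter.Eventually.of_forall fun v => (integrable_mul_gaussMonomial_sub hg hgC n v).1)
    (integrable_mul_gaussMonomial_sub hg hgC n w) hF'_int.1 (ae_of_all _ hbound) hbound_int
    (ae_of_all _ hderiv)).2
  rwa [integral_sub (integrable_mul_gaussMonomial_sub hg hgC _ w)
    ((integrable_mul_gaussMonomial_sub hg hgC _ w).const_mul _), integral_const_mul] at key

lemma integral_mul_quadratic_gaussMonomial_sub (hg : Measurable g) (hgC : ∀ s, |g s| ≤ C)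
    (α β γ w : ℝ) :
    ∫ s, g s * ((α * (s - w) ^ 2 + β * (s - w) + γ) * exp (-(s - w) ^ 2 / 2)) =
      α * gaussianMoment g 2 w + β * gaussianMoment g 1 w + γ * gaussianMoment g 0 w := by
  have h : ∀ m, Integrable fun s => g s * gaussMonomial m (s - w) :=
    fun m => integrable_mul_gaussMonomial_sub hg hgC m w
  calc _ = ∫ s, (α * (g s * gaussMonomial 2 (s - w)) + β * (g s * gaussMonomial 1 (s - w))) +
        γ * (g s * gaussMonomial 0 (s - w)) := by
        congr 1 with s
        simp only [gaussMonomial]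
        ring
    _ = _ := by
      rw [integral_add (((h 2).const_mul α).fun_add ((h 1).const_mul β)) ((h 0).const_mul γ),
        integral_add ((h 2).const_mul α) ((h 1).const_mul β), integral_const_mul,
        integral_const_mul, integral_const_mul]
      rfl

variable {a b x : ℝ}

lemma hasDerivAt_gaussianMoment_comp_log (hg : Measurable g) (hgC : ∀ s, |g s| ≤ C)
    (n : ℕ) (ha : a ≠ 0) (hx : 0 < x) :
    HasDerivAt (fun y => gaussianMoment g n ((log y - b) / a))
      ((gaussianMoment g (n + 1) ((log x - b) / a) -
        n * gaussianMoment g (n - 1) ((log x - b) / a)) / (a * x)) x :=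
  ((hasDerivAt_gaussianMoment hg hgC n _).comp x
    (((hasDerivAt_log hx.ne').sub_const b).div_const a)).congr_deriv (by field_simp)

lemma hasDerivAt_of_eqOn_gaussianMoment_comp_log (hg : Measurable g) (hgC : ∀ s, |g s| ≤ C)
    (ha : a ≠ 0) {u : ℝ → ℝ} (hu : ∀ y, 0 < y → u y = gaussianMoment g 0 ((log y - b) / a))
    (hx : 0 < x) :
    HasDerivAt u (gaussianMoment g 1 ((log x - b) / a) / (a * x)) x := by
  have hux : u =ᶠ[nhds x] fun y => gaussianMoment g 0 ((log y - b) / a) :=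
    Filter.eventually_of_mem (Ioi_mem_nhds hx) hu
  simpa using (hasDerivAt_gaussianMoment_comp_log hg hgC 0 ha hx).congr_of_eventuallyEq hux

lemma hasDerivAt_deriv_of_eqOn_gaussianMoment_comp_log (hg : Measurable g)
    (hgC : ∀ s, |g s| ≤ C) (ha : a ≠ 0) {u : ℝ → ℝ}
    (hu : ∀ y, 0 < y → u y = gaussianMoment g 0 ((log y - b) / a)) (hx : 0 < x) :
    HasDerivAt (deriv u)
      ((gaussianMoment g 2 ((log x - b) / a) - gaussianMoment g 0 ((log x - b) / a)) /
          (a * x) ^ 2 - gaussianMoment g 1 ((log x - b) / a) / (a * x ^ 2)) x := by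
  have hu' : deriv u =ᶠ[nhds x] fun y => gaussianMoment g 1 ((log y - b) / a) / (a * y) :=
    Filter.eventually_of_mem (Ioi_mem_nhds hx) fun y hy =>
      (hasDerivAt_of_eqOn_gaussianMoment_comp_log hg hgC ha hu hy).deriv
  refine (((hasDerivAt_gaussianMoment_comp_log hg hgC 1 ha hx).div
    ((hasDerivAt_id' x).const_mul a) (mul_ne_zero ha hx.ne')).congr_of_eventuallyEq
      hu').congr_deriv ?_
  field_simp
  ring

end BoundedMeasurable

lemma integral_comp_eq_of_map_eq_gaussianReal {Ω : Type*} [MeasurableSpace Ω] {μ : Measure Ω}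
    {G : Ω → ℝ} (hG : Measurable G) (hlaw : μ.map G = gaussianReal 0 1) {h : ℝ → ℝ}
    (hh : Measurable h) :
    ∫ ω, h (G ω) ∂μ = ∫ t, (√(2 * π))⁻¹ * h t * exp (-t ^ 2 / 2) := by
  rw [← integral_map hG.aemeasurable hh.aestronglyMeasurable, hlaw,
    integral_gaussianReal_eq_integral_smul one_ne_zero]
  congr 1 with t
  simp [gaussianPDFReal]
  ring

lemma integral_mul_comp_lognormal_eq {Ω : Type*} [MeasurableSpace Ω] {μ : Measure Ω}
    {G : Ω → ℝ} (hG : Measurable G) (hlaw : μ.map G = gaussianReal 0 1) {f P : ℝ → ℝ}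
    (hf : Measurable f) (hP : Measurable P) {a : ℝ} (ha : a ≠ 0) (b : ℝ) {x : ℝ}
    (hx : 0 < x) :
    ∫ ω, f (x * exp (a * G ω - b)) * P (G ω) ∂μ =
      ∫ s, (√(2 * π))⁻¹ * f (exp (a * s)) *
        (P (s - (log x - b) / a) * exp (-(s - (log x - b) / a) ^ 2 / 2)) := by
  set w := (log x - b) / a
  have hexp_shift : ∀ t, x * exp (a * t - b) = exp (a * (t + w)) := fun t => by
    have h : a * (t + w) = log x + (a * t - b) := by
      simp only [w]
      field_simp
      ring
    rw [h, exp_add, exp_log hx]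
  rw [integral_comp_eq_of_map_eq_gaussianReal hG hlaw
    (h := fun t => f (x * exp (a * t - b)) * P t) (by fun_prop)]
  conv_rhs => rw [← integral_add_right_eq_self _ w]
  congr 1 with t
  rw [hexp_shift, add_sub_cancel_right]
  ring

theorem stmt_12_general {Ω : Type*} [MeasurableSpace Ω] (μ : Measure Ω)
    (σ T : ℝ) (hσ : 0 < σ) (hT : 0 < T)
    (G : Ω → ℝ) (hG : Measurable G) (hlaw : Measure.map G μ = gaussianReal 0 1)
    (f : ℝ → ℝ) (hfmeas : Measurable f) (hfbdd : ∃ C : ℝ, ∀ y, |f y| ≤ C)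
    (u : ℝ → ℝ)
    (hu : ∀ x, u x = ∫ ω, f (x * Real.exp (σ * Real.sqrt T * G ω - σ ^ 2 * T / 2)) ∂μ) :
    ∀ x : ℝ, 0 < x →
      DifferentiableAt ℝ u x ∧
      HasDerivAt (deriv u)
        (∫ ω, f (x * Real.exp (σ * Real.sqrt T * G ω - σ ^ 2 * T / 2)) *
          ((G ω / (x * σ * Real.sqrt T)) ^ 2 - G ω / (x ^ 2 * σ * Real.sqrt T)
            - 1 / (x ^ 2 * σ ^ 2 * T)) ∂μ) x := by
  obtain ⟨C, hC⟩ := hfbdd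
  intro x hx
  set a := σ * √T
  have ha : a ≠ 0 := (mul_pos hσ (sqrt_pos.2 hT)).ne'
  set g : ℝ → ℝ := fun s => (√(2 * π))⁻¹ * f (exp (a * s))
  have hg : Measurable g := by fun_prop
  have hgC : ∀ s, |g s| ≤ (√(2 * π))⁻¹ * C := fun s => by
    rw [abs_mul, abs_of_pos (by positivity)]
    gcongr
    exact hC _
  have hrepr : ∀ y, 0 < y → u y = gaussianMoment g 0 ((log y - σ ^ 2 * T / 2) / a) :=
    fun y hy => by
      simpa only [hu, gaussianMoment, gaussMonomial, g, pow_zero, one_mul, mul_one] using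
        integral_mul_comp_lognormal_eq hG hlaw hfmeas (P := fun _ => 1) measurable_const ha
          (σ ^ 2 * T / 2) hy
  refine ⟨(hasDerivAt_of_eqOn_gaussianMoment_comp_log hg hgC ha hrepr hx).differentiableAt, ?_⟩
  have hmoments := integral_mul_comp_lognormal_eq hG hlaw hfmeas
    (P := fun t => 1 / (a * x) ^ 2 * t ^ 2 + -1 / (a * x ^ 2) * t + -1 / (a * x) ^ 2)
    (by fun_prop) ha (σ ^ 2 * T / 2) hx
  rw [integral_mul_quadratic_gaussMonomial_sub hg hgC] at hmoments
  convert hasDerivAt_deriv_of_eqOn_gaussianMoment_comp_log hg hgC ha hrepr hx using 1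
  refine (integral_congr_ae (ae_of_all _ fun ω => ?_)).trans (hmoments.trans (by ring))
  simp only [a]
  field_simp
  rw [sq_sqrt hT.le]
  ring

/-- Let `G ~ N(0,1)`, `σ, T > 0`, `f` bounded measurable and
`u(x) := E[f(x e^{σ√T G - σ²T/2})]`.  Then `u` is twice differentiable on `(0,∞)` with
`u''(x) = E[f(x e^{σ√T G - σ²T/2}) ((G/(xσ√T))² - G/(x²σ√T) - 1/(x²σ²T))]`. -/
theorem stmt_12 {Ω : Type*} [MeasurableSpace Ω] (μ : Measure Ω) [IsProbabilityMeasure μ]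
    (σ T : ℝ) (hσ : 0 < σ) (hT : 0 < T)
    (G : Ω → ℝ) (hG : Measurable G) (hlaw : Measure.map G μ = gaussianReal 0 1)
    (f : ℝ → ℝ) (hfmeas : Measurable f) (hfbdd : ∃ C : ℝ, ∀ y, |f y| ≤ C)
    (u : ℝ → ℝ)
    (hu : ∀ x, u x = ∫ ω, f (x * Real.exp (σ * Real.sqrt T * G ω - σ ^ 2 * T / 2)) ∂μ) :
    ∀ x : ℝ, 0 < x →
      DifferentiableAt ℝ u x ∧
      HasDerivAt (deriv u)
        (∫ ω, f (x * Real.exp (σ * Real.sqrt T * G ω - σ ^ 2 * T / 2)) *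
          ((G ω / (x * σ * Real.sqrt T)) ^ 2 - G ω / (x ^ 2 * σ * Real.sqrt T)
            - 1 / (x ^ 2 * σ ^ 2 * T)) ∂μ) x :=
  stmt_12_general μ σ T hσ hT G hG hlaw f hfmeas hfbdd u hu
end

section
/- Let G ~ N(0,1), T > 0, x > 0, and f : ℝ → ℝ bounded measurable. Define v(σ) := E[f(x e^{σ√T G - σ²T/2})] for σ > 0, and set W(T) = √T G and S(T) = x e^{σ W(T) - σ²T/2}. Then v is differentiable and v'(σ) = E[f(S(T)) · ( W(T)²/(σT) − W(T) − 1/σ )]. -/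
set_option maxHeartbeats 1000000
open MeasureTheory ProbabilityTheory Real


noncomputable def pdfσ (T σ u : ℝ) : ℝ :=
  (Real.sqrt (2*π*T))⁻¹ * σ⁻¹ * Real.exp (-(u + σ^2*T/2)^2 / (2*(σ^2*T)))

noncomputable def wσ (T σ u : ℝ) : ℝ :=
  (u + σ^2*T/2)^2/(σ^3*T) - (u + σ^2*T/2)/σ - 1/σ

lemma hasDerivAt_pdfσ (T u : ℝ) (hT : 0 < T) {σ : ℝ} (hσ : 0 < σ) :
    HasDerivAt (fun s => pdfσ T s u) (pdfσ T σ u * wσ T σ u) σ := by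
  have hσ' : σ ≠ 0 := hσ.ne'
  have hT' : T ≠ 0 := hT.ne'
  have hbase : HasDerivAt (fun s : ℝ => u + s^2*T/2) (2*σ^1*T/2) σ := by
    exact (((hasDerivAt_pow 2 σ).mul_const T).div_const 2).const_add u
  have hnum : HasDerivAt (fun s : ℝ => -(u + s^2*T/2)^2)
      (-(2*(u + σ^2*T/2)^1 * (2*σ^1*T/2))) σ := by
    exact_mod_cast (hbase.pow 2).neg
  have hden : HasDerivAt (fun s : ℝ => 2*(s^2*T)) (2*(2*σ^1*T)) σ := by
    exact_mod_cast ((hasDerivAt_pow 2 σ).mul_const T).const_mul 2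
  have hden0 : 2*(σ^2*T) ≠ 0 := by positivity
  have hE : HasDerivAt (fun s : ℝ => -(u + s^2*T/2)^2 / (2*(s^2*T)))
      (((-(2*(u + σ^2*T/2)^1 * (2*σ^1*T/2))) * (2*(σ^2*T)) -
        (-(u + σ^2*T/2)^2) * (2*(2*σ^1*T))) / (2*(σ^2*T))^2) σ := hnum.div hden hden0
  have hexp := hE.exp
  have hc : HasDerivAt (fun s : ℝ => (Real.sqrt (2*π*T))⁻¹ * s⁻¹)
      ((Real.sqrt (2*π*T))⁻¹ * (-(σ^2)⁻¹)) σ := (hasDerivAt_inv hσ').const_mul _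
  have h := hc.mul hexp
  unfold pdfσ wσ
  refine h.congr_deriv ?_
  field_simp
  ring


lemma pdfw_bound_aux (T l h c M α β : ℝ) (hT : 0 < T) (hl : 0 < l) (hc : 0 ≤ c)
    (hα : α = (2*h^2*T)⁻¹) (hβ : β = 2*(h^2*T/2)*α)
    (hM : M = (2*(h^2*T/2)^2)/(l^3*T) + (h^2*T/2)/l + 1/l + 1/l + 2*(2/(l^3*T)))
    (hcs : c = (Real.sqrt (2*π*T))⁻¹)
    {σ u : ℝ} (hσl : l < σ) (hσh : σ < h) :
    |pdfσ T σ u * wσ T σ u| ≤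
      c * l⁻¹ * M * Real.exp ((β+1)^2/(2*α)) * Real.exp (-(α/2) * u^2) := by
  have hσ0 : 0 < σ := lt_trans hl hσl
  have hh0 : 0 < h := lt_trans hσ0 hσh
  have hα0 : 0 < α := by rw [hα]; positivity
  have hβ0 : 0 < β := by rw [hβ, hα]; positivity
  have hT' : T ≠ 0 := hT.ne'
  obtain ⟨A, hA⟩ : ∃ A, A = h^2*T/2 := ⟨_, rfl⟩
  have hA0 : 0 < A := by rw [hA]; positivity
  obtain ⟨a, ha⟩ : ∃ a, a = σ^2*T/2 := ⟨_, rfl⟩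
  have ha0 : 0 < a := by rw [ha]; positivity
  have haA : a ≤ A := by
    rw [ha, hA]
    have h1 : σ^2 ≤ h^2 := by nlinarith
    nlinarith [mul_le_mul_of_nonneg_right h1 hT.le]
  obtain ⟨t, ht⟩ : ∃ t, t = |u| := ⟨_, rfl⟩
  have ht0 : 0 ≤ t := ht ▸ abs_nonneg u
  have htu : u ≤ t := ht ▸ le_abs_self u
  have htu' : -t ≤ u := ht ▸ neg_abs_le u
  have ht2 : t^2 = u^2 := by rw [ht, sq_abs]
  -- exponential bound
  have hexp : Real.exp (-(u + a)^2 / (2*(σ^2*T))) ≤ Real.exp (β*t - α*u^2) := by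
    apply Real.exp_le_exp.mpr
    have h1 : -(u+a)^2 / (2*(σ^2*T)) ≤ -(u+a)^2 / (2*(h^2*T)) := by
      rw [div_le_div_iff₀ (by positivity) (by positivity)]
      nlinarith [sq_nonneg (u+a)]
    have h2 : -(u+a)^2 ≤ -u^2 + 2*A*t := by nlinarith
    calc -(u+a)^2 / (2*(σ^2*T)) ≤ -(u+a)^2 / (2*(h^2*T)) := h1
      _ = (-(u+a)^2) * α := by rw [hα]; ring
      _ ≤ (-u^2 + 2*A*t) * α := mul_le_mul_of_nonneg_right h2 hα0.le
      _ = β*t - α*u^2 := by rw [hβ, ← hA]; ring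
  -- |wσ| ≤ poly
  have habs : |u + σ^2*T/2| ≤ t + A := by
    calc |u + σ^2*T/2| ≤ |u| + |σ^2*T/2| := abs_add_le _ _
      _ ≤ t + A := by
          rw [ht]
          refine add_le_add le_rfl ?_
          rw [abs_of_pos (by positivity), ← ha]; exact haA
  have hwb : |wσ T σ u| ≤ (2*A^2)/(l^3*T) + A/l + 1/l + (1/l)*t + (2/(l^3*T))*t^2 := by
    unfold wσ
    have h1 : |(u + σ^2*T/2)^2/(σ^3*T)| ≤ (2*t^2 + 2*A^2)/(l^3*T) := by
      rw [abs_div, abs_of_nonneg (by positivity : (0:ℝ) ≤ (u + σ^2*T/2)^2),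
        abs_of_nonneg (by positivity : (0:ℝ) ≤ σ^3*T)]
      apply div_le_div₀ (by positivity)
      · calc (u + σ^2*T/2)^2 = |u + σ^2*T/2|^2 := (sq_abs _).symm
          _ ≤ (t + A)^2 := by
              exact pow_le_pow_left₀ (abs_nonneg _) habs 2
          _ ≤ 2*t^2 + 2*A^2 := by nlinarith [sq_nonneg (t - A)]
      · positivity
      · have h1 : l^3 ≤ σ^3 := pow_le_pow_left₀ hl.le hσl.le 3
        exact mul_le_mul_of_nonneg_right h1 hT.le
    have h2 : |(u + σ^2*T/2)/σ| ≤ (t + A)/l := by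
      rw [abs_div, abs_of_pos hσ0]
      exact div_le_div₀ (by positivity) habs hl hσl.le
    have h3 : |1/σ| ≤ 1/l := by
      rw [abs_of_pos (by positivity)]
      exact div_le_div_of_nonneg_left one_pos.le hl hσl.le
    calc |(u + σ^2*T/2)^2/(σ^3*T) - (u + σ^2*T/2)/σ - 1/σ|
        ≤ |(u + σ^2*T/2)^2/(σ^3*T)| + |(u + σ^2*T/2)/σ| + |1/σ| :=
          (abs_sub _ _).trans (add_le_add (abs_sub _ _) le_rfl)
      _ ≤ (2*t^2 + 2*A^2)/(l^3*T) + (t + A)/l + 1/l := add_le_add (add_le_add h1 h2) h3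
      _ = (2*A^2)/(l^3*T) + A/l + 1/l + (1/l)*t + (2/(l^3*T))*t^2 := by
          field_simp; ring
  -- poly ≤ M * exp t
  have hpoly : (2*A^2)/(l^3*T) + A/l + 1/l + (1/l)*t + (2/(l^3*T))*t^2 ≤ M * Real.exp t := by
    have he1 : (1:ℝ) ≤ Real.exp t := Real.one_le_exp ht0
    have he2 : t ≤ Real.exp t := (Real.add_one_le_exp t).trans' (by linarith)
    have he3 : t^2 ≤ 2 * Real.exp t := by nlinarith [Real.quadratic_le_exp_of_nonneg ht0]
    have c1 : 0 ≤ (2*A^2)/(l^3*T) + A/l + 1/l := by positivity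
    have c2 : (0:ℝ) ≤ 1/l := by positivity
    have c3 : (0:ℝ) ≤ 2/(l^3*T) := by positivity
    rw [hM, ← hA]
    nlinarith [mul_le_mul_of_nonneg_left he2 c2, mul_le_mul_of_nonneg_left he3 c3,
      mul_le_mul_of_nonneg_left he1 c1]
  -- AM-GM: (β+1)*t ≤ (α/2)*t² + (β+1)²/(2α)
  have hamgm : (β+1)*t ≤ (α/2)*t^2 + (β+1)^2/(2*α) := by
    have key : 2*(β+1)*t ≤ α*t^2 + (β+1)^2/α := by
      rw [← sub_nonneg]
      have heq : α*t^2 + (β+1)^2/α - 2*(β+1)*t = (α*t - (β+1))^2 / α := by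
        field_simp; ring
      rw [heq]; positivity
    have h2 : (β+1)^2/(2*α) = (β+1)^2/α/2 := by ring
    linarith
  -- combine
  have hM0 : 0 < M := by rw [hM]; positivity
  have hpdf : |pdfσ T σ u| ≤ c * l⁻¹ * Real.exp (β*t - α*u^2) := by
    unfold pdfσ
    rw [← hcs, abs_mul, abs_mul, abs_of_nonneg hc, abs_of_pos (by positivity : (0:ℝ) < σ⁻¹),
      abs_of_pos (Real.exp_pos _), ← ha]
    have : σ⁻¹ ≤ l⁻¹ := by
      apply inv_anti₀ hl hσl.le
    exact mul_le_mul (mul_le_mul le_rfl this (by positivity) hc) hexp (Real.exp_pos _).le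
      (by positivity)
  calc |pdfσ T σ u * wσ T σ u| = |pdfσ T σ u| * |wσ T σ u| := abs_mul _ _
    _ ≤ (c * l⁻¹ * Real.exp (β*t - α*u^2)) * (M * Real.exp t) := by
        apply mul_le_mul hpdf (hwb.trans hpoly) (abs_nonneg _) (by positivity)
    _ = c * l⁻¹ * M * Real.exp ((β+1)*t - α*t^2) := by
        rw [show (β+1)*t - α*t^2 = (β*t - α*u^2) + t by rw [ht2]; ring, Real.exp_add]; ring
    _ ≤ c * l⁻¹ * M * Real.exp ((β+1)^2/(2*α) + (-(α/2) * t^2)) := by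
        apply mul_le_mul_of_nonneg_left _ (by positivity)
        apply Real.exp_le_exp.mpr
        linarith [hamgm]
    _ = c * l⁻¹ * M * Real.exp ((β+1)^2/(2*α)) * Real.exp (-(α/2) * u^2) := by
        rw [Real.exp_add, ht2]; ring


lemma Vσ_pos (T σ : ℝ) (hT : 0 < T) (hσ : 0 < σ) : 0 < σ^2*T := by positivity

lemma pdf_eq (T σ : ℝ) (hT : 0 < T) (hσ : 0 < σ) (u : ℝ) :
    gaussianPDFReal (-(σ^2*T/2)) ⟨σ^2*T, (Vσ_pos T σ hT hσ).le⟩ u = pdfσ T σ u := by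
  unfold gaussianPDFReal pdfσ
  change (√(2*π*(σ^2*T)))⁻¹ * rexp (-(u - -(σ^2*T/2))^2 / (2*(σ^2*T))) = _
  congr 1
  · rw [show 2*π*(σ^2*T) = σ^2*(2*π*T) by ring, Real.sqrt_mul (sq_nonneg σ),
      Real.sqrt_sq hσ.le, mul_inv]
    ring
  · congr 1
    rw [sub_neg_eq_add]

lemma map_affine {Ω : Type*} [MeasurableSpace Ω] (μ : Measure Ω) (T σ : ℝ)
    (hT : 0 < T) (hσ : 0 < σ) (G : Ω → ℝ) (hG : Measurable G)
    (hlaw : Measure.map G μ = gaussianReal 0 1) :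
    Measure.map (fun ω => σ * Real.sqrt T * G ω - σ^2*T/2) μ
      = gaussianReal (-(σ^2*T/2)) ⟨σ^2*T, (Vσ_pos T σ hT hσ).le⟩ := by
  have h1 : (fun ω => σ * Real.sqrt T * G ω - σ^2*T/2)
      = (fun y => y + -(σ^2*T/2)) ∘ (fun y => (σ * Real.sqrt T) * y) ∘ G := by
    funext ω; simp [Function.comp, sub_eq_add_neg]
  rw [h1, ← Measure.map_map (by fun_prop) (by fun_prop),
    ← Measure.map_map (by fun_prop) hG, hlaw]
  rw [show (fun y : ℝ => (σ * Real.sqrt T) * y) = ((σ * Real.sqrt T) * ·) from rfl,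
    gaussianReal_map_const_mul]
  rw [show (fun y : ℝ => y + -(σ^2*T/2)) = (· + -(σ^2*T/2)) from rfl,
    gaussianReal_map_add_const]
  congr 1
  · ring
  · ext
    simp only [NNReal.coe_mul, NNReal.coe_mk, NNReal.coe_one]
    change (σ * √T) ^ 2 * 1 = σ^2*T
    rw [mul_pow, Real.sq_sqrt hT.le]
    ring

lemma integral_gaussianReal' (m : ℝ) (V : NNReal) (hV : V ≠ 0) (g : ℝ → ℝ) :
    ∫ u, g u ∂(gaussianReal m V) = ∫ u, gaussianPDFReal m V u * g u := by
  rw [gaussianReal_of_var_ne_zero m hV]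
  have h1 : gaussianPDF m V = fun x => ((gaussianPDFReal m V x).toNNReal : ENNReal) := rfl
  rw [h1, integral_withDensity_eq_integral_smul
    (by exact (measurable_gaussianPDFReal m V).real_toNNReal) g]
  congr 1
  funext x
  rw [NNReal.smul_def, Real.coe_toNNReal _ (gaussianPDFReal_nonneg m V x)]
  simp


lemma pdfw_bound (T σ₀ : ℝ) (hT : 0 < T) (hσ₀ : 0 < σ₀) :
    ∃ K α : ℝ, 0 < α ∧ ∀ σ ∈ Metric.ball σ₀ (σ₀/2), ∀ u : ℝ,
      |pdfσ T σ u * wσ T σ u| ≤ K * Real.exp (-α * u^2) := by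
  obtain ⟨l, hl'⟩ : ∃ l : ℝ, l = σ₀/2 := ⟨_, rfl⟩
  obtain ⟨h, hh'⟩ : ∃ h : ℝ, h = 3*σ₀/2 := ⟨_, rfl⟩
  obtain ⟨c, hc'⟩ : ∃ c : ℝ, c = (Real.sqrt (2*π*T))⁻¹ := ⟨_, rfl⟩
  obtain ⟨α, hα⟩ : ∃ α : ℝ, α = (2*h^2*T)⁻¹ := ⟨_, rfl⟩
  obtain ⟨β, hβ⟩ : ∃ β : ℝ, β = 2*(h^2*T/2)*α := ⟨_, rfl⟩
  obtain ⟨M, hM⟩ : ∃ M : ℝ,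
      M = (2*(h^2*T/2)^2)/(l^3*T) + (h^2*T/2)/l + 1/l + 1/l + 2*(2/(l^3*T)) := ⟨_, rfl⟩
  have hl : 0 < l := by rw [hl']; positivity
  have hh0 : 0 < h := by rw [hh']; positivity
  have hc : 0 ≤ c := by rw [hc']; positivity
  have hα0 : 0 < α := by rw [hα]; positivity
  refine ⟨c * l⁻¹ * M * Real.exp ((β+1)^2/(2*α)), α/2, by positivity, ?_⟩
  intro σ hσb u
  rw [Metric.mem_ball, Real.dist_eq, abs_lt] at hσb
  have hσl : l < σ := by rw [hl']; linarith [hσb.1]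
  have hσh : σ < h := by rw [hh']; linarith [hσb.2]
  exact pdfw_bound_aux T l h c M α β hT hl hc hα hβ hM hc' hσl hσh

lemma pdfσ_meas (T σ : ℝ) : Measurable (pdfσ T σ) := by unfold pdfσ; fun_prop

lemma wσ_meas (T σ : ℝ) : Measurable (wσ T σ) := by unfold wσ; fun_prop

/-- Let `G ~ N(0,1)`, `T > 0`, `x > 0`, `f` bounded measurable and
`v(σ) := E[f(x e^{σ√T G - σ²T/2})]` for `σ > 0`.  Then `v` is differentiable with
`v'(σ) = E[f(S(T)) (W(T)²/(σT) - W(T) - 1/σ)]` where `W(T) = √T G` — the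
one-dimensional Malliavin Vega formula. -/
theorem stmt_13 {Ω : Type*} [MeasurableSpace Ω] (μ : Measure Ω) [IsProbabilityMeasure μ]
    (T x : ℝ) (hT : 0 < T) (hx : 0 < x)
    (G : Ω → ℝ) (hG : Measurable G) (hlaw : Measure.map G μ = gaussianReal 0 1)
    (f : ℝ → ℝ) (hfmeas : Measurable f) (hfbdd : ∃ C : ℝ, ∀ y, |f y| ≤ C)
    (v : ℝ → ℝ)
    (hv : ∀ σ : ℝ, v σ =
      ∫ ω, f (x * Real.exp (σ * Real.sqrt T * G ω - σ ^ 2 * T / 2)) ∂μ) :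
    ∀ σ : ℝ, 0 < σ →
      HasDerivAt v
        (∫ ω, f (x * Real.exp (σ * Real.sqrt T * G ω - σ ^ 2 * T / 2)) *
          ((Real.sqrt T * G ω) ^ 2 / (σ * T) - Real.sqrt T * G ω - 1 / σ) ∂μ) σ := by
  intro σ hσ
  obtain ⟨C, hC⟩ := hfbdd
  have hC0 : 0 ≤ C := le_trans (abs_nonneg _) (hC 0)
  have hmeasf : Measurable fun u : ℝ => f (x * Real.exp u) :=
    hfmeas.comp (measurable_const.mul Real.measurable_exp)
  -- representation of v on (0, ∞)
  have hrepr : ∀ s : ℝ, 0 < s →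
      v s = ∫ u, f (x * Real.exp u) * pdfσ T s u := by
    intro s hs
    have hVne : (⟨s^2*T, (Vσ_pos T s hT hs).le⟩ : NNReal) ≠ 0 := by
      exact fun h => (Vσ_pos T s hT hs).ne' (congrArg Subtype.val h)
    have hφ : Measurable (fun ω => s * Real.sqrt T * G ω - s^2*T/2) := by fun_prop
    rw [hv s,
      show ∫ ω, f (x * Real.exp (s * Real.sqrt T * G ω - s ^ 2 * T / 2)) ∂μ
        = ∫ u, f (x * Real.exp u)
            ∂(Measure.map (fun ω => s * Real.sqrt T * G ω - s^2*T/2) μ) from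
        (integral_map hφ.aemeasurable hmeasf.aestronglyMeasurable).symm,
      map_affine μ T s hT hs G hG hlaw, integral_gaussianReal' _ _ hVne]
    congr 1
    funext u
    rw [pdf_eq T s hT hs u, mul_comm]
  -- derivative under the integral
  have hε : 0 < σ/2 := by positivity
  set F : ℝ → ℝ → ℝ := fun s u => f (x * Real.exp u) * pdfσ T s u with hF
  set F' : ℝ → ℝ → ℝ := fun s u => f (x * Real.exp u) * (pdfσ T s u * wσ T s u) with hF'
  obtain ⟨K, α, hα0, hKb⟩ := pdfw_bound (T := T) (σ₀ := σ) hT hσ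
  have hball : ∀ s ∈ Metric.ball σ (σ/2), 0 < s := by
    intro s hs
    rw [Metric.mem_ball, Real.dist_eq, abs_lt] at hs
    linarith [hs.1]
  have hmain : HasDerivAt (fun s => ∫ u, F s u) (∫ u, F' σ u) σ := by
    refine (hasDerivAt_integral_of_dominated_loc_of_deriv_le (Metric.ball_mem_nhds σ hε)
      (F := F) (F' := F') (bound := fun u => C * (K * Real.exp (-α * u^2)))
      (Filter.Eventually.of_forall fun s =>
        (hmeasf.mul (pdfσ_meas T s)).aestronglyMeasurable)
      ?_ ((hmeasf.mul ((pdfσ_meas T σ).mul (wσ_meas T σ))).aestronglyMeasurable)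
      ?_ ?_ ?_).2
    · -- integrability of F σ
      have hVne : (⟨σ^2*T, (Vσ_pos T σ hT hσ).le⟩ : NNReal) ≠ 0 := by
        exact fun h => (Vσ_pos T σ hT hσ).ne' (congrArg Subtype.val h)
      refine Integrable.mono
        ((integrable_gaussianPDFReal (-(σ^2*T/2)) ⟨σ^2*T, (Vσ_pos T σ hT hσ).le⟩).const_mul C)
        (hmeasf.mul (pdfσ_meas T σ)).aestronglyMeasurable ?_
      filter_upwards with u
      rw [Real.norm_eq_abs, Real.norm_eq_abs, abs_mul, abs_mul, abs_of_nonneg hC0,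
        ← pdf_eq T σ hT hσ u]
      exact mul_le_mul_of_nonneg_right (hC _) (abs_nonneg _)
    · -- bound
      filter_upwards with u
      intro s hs
      rw [Real.norm_eq_abs, abs_mul]
      exact mul_le_mul (hC _) (hKb s hs u) (abs_nonneg _) hC0
    · -- bound integrable
      exact ((integrable_exp_neg_mul_sq hα0).const_mul K).const_mul C
    · -- differentiability
      filter_upwards with u
      intro s hs
      exact (hasDerivAt_pdfσ T u hT (hball s hs)).const_mul _
  -- v agrees with the integral near σ
  have hveq : v =ᶠ[nhds σ] fun s => ∫ u, F s u := by
    filter_upwards [isOpen_Ioi.mem_nhds (Set.mem_Ioi.mpr hσ)] with s hs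
    exact hrepr s hs
  have hvd : HasDerivAt v (∫ u, F' σ u) σ := hmain.congr_of_eventuallyEq hveq
  -- identify the derivative
  have hfinal : (∫ u, F' σ u) =
      ∫ ω, f (x * Real.exp (σ * Real.sqrt T * G ω - σ ^ 2 * T / 2)) *
        ((Real.sqrt T * G ω) ^ 2 / (σ * T) - Real.sqrt T * G ω - 1 / σ) ∂μ := by
    have hVne : (⟨σ^2*T, (Vσ_pos T σ hT hσ).le⟩ : NNReal) ≠ 0 := by
      exact fun h => (Vσ_pos T σ hT hσ).ne' (congrArg Subtype.val h)
    have hφ : Measurable (fun ω => σ * Real.sqrt T * G ω - σ^2*T/2) := by fun_prop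
    have h1 : (∫ u, F' σ u) =
        ∫ u, gaussianPDFReal (-(σ^2*T/2)) ⟨σ^2*T, (Vσ_pos T σ hT hσ).le⟩ u *
          (f (x * Real.exp u) * wσ T σ u) := by
      congr 1
      funext u
      rw [pdf_eq T σ hT hσ u]
      ring
    rw [h1, ← integral_gaussianReal' _ _ hVne, ← map_affine μ T σ hT hσ G hG hlaw,
      integral_map (f := fun u => f (x * Real.exp u) * wσ T σ u) hφ.aemeasurable (hmeasf.mul (wσ_meas T σ)).aestronglyMeasurable]
    congr 1
    funext ω
    congr 1
    unfold wσ
    rw [show σ * Real.sqrt T * G ω - σ^2*T/2 + σ^2*T/2 = σ * Real.sqrt T * G ω by ring]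
    rw [mul_pow, mul_pow, mul_pow, Real.sq_sqrt hT.le]
    field_simp
  rwa [hfinal] at hvd
end
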